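/- Assume Φ and ω are compatible and X = {x_1,…,x_n} is a sampling set for Φ. Let f be a function of the form f(x) = Σ_k c_k φ_k(x) (the series converging absolutely at every point) with Σ_k ω_k c_k² < ∞. Then for every ε > 0 there exist a finite p and a function g ∈ span{φ_1,…,φ_p} such that g(x_j) = f(x_j) for all j = 1,…,n and ‖f − g‖_{L²_μ(Ω)} ≤ inf{ ‖f − h‖_{L²_μ(Ω)} : h ∈ span{φ_1,…,φ_p} } + ε. -/

import Mathlib

open MeasureTheory Filter Finset Matrix
open scoped ENNReal BigOperators

noncomputable section

/-- Truncated kernel `K_p(x,y) = ∑_{k<p} ω_k⁻¹ φ_k(x) φ_k(y)`. -/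
def Kpart {Ω : Type*} (ω : ℕ → ℝ) (φ : ℕ → Ω → ℝ) (p : ℕ) (x y : Ω) : ℝ :=
  ∑ k ∈ Finset.range p, (ω k)⁻¹ * φ k x * φ k y

/-- The matrix `𝐊_p = (K_p(x_i,x_j))`. -/
def KpartMat {Ω : Type*} (ω : ℕ → ℝ) (φ : ℕ → Ω → ℝ) {n : ℕ} (X : Fin n → Ω) (p : ℕ) :
    Matrix (Fin n) (Fin n) ℝ :=
  Matrix.of fun i j => Kpart ω φ p (X i) (X j)

/-- The matrix `𝐊 = (K(x_i,x_j))`. -/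
def KMat {Ω : Type*} (K : Ω → Ω → ℝ) {n : ℕ} (X : Fin n → Ω) : Matrix (Fin n) (Fin n) ℝ :=
  Matrix.of fun i j => K (X i) (X j)

/-- The minimum weighted norm interpolant `f_p(x) = ∑_k K_p(x,x_k) (𝐊_p⁻¹ y)_k`. -/
def interpP {Ω : Type*} (ω : ℕ → ℝ) (φ : ℕ → Ω → ℝ) {n : ℕ} (X : Fin n → Ω)
    (y : Fin n → ℝ) (p : ℕ) (x : Ω) : ℝ :=
  ∑ j, Kpart ω φ p x (X j) * ((KpartMat ω φ X p)⁻¹ *ᵥ y) j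

/-- The limiting interpolant `f_∞(x) = ∑_k K(x,x_k) (𝐊⁻¹ y)_k`. -/
def interpInf {Ω : Type*} (K : Ω → Ω → ℝ) {n : ℕ} (X : Fin n → Ω)
    (y : Fin n → ℝ) (x : Ω) : ℝ :=
  ∑ j, K x (X j) * ((KMat K X)⁻¹ *ᵥ y) j

/-! Because `ω_k → ∞`, the coefficients `c` are square summable, so by orthonormality and
Fatou's lemma the truncations `S_N f = ∑_{k<N} c_k φ_k` converge to `f` in `L²`. As `X` is a
sampling set, the residual `(f - S_N f)|_X` is interpolated by an element of
`span{φ_k : k < p_X}` whose coefficients depend linearly on the residual and hence tend to `0`.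
For large `N ≥ p_X`, `S_N f` plus this correction interpolates `f` on `X` and is within `ε` of `f`
in `L²`, which is stronger than the claimed bound. -/

open Topology

section L2Expansion

variable {Ω : Type*} [MeasurableSpace Ω] {μ : Measure Ω}

theorem aestronglyMeasurable_tsum_mul {φ : ℕ → Ω → ℝ} (hφ : ∀ k, AEStronglyMeasurable (φ k) μ)
    {c : ℕ → ℝ} (hsum : ∀ x, Summable fun k => c k * φ k x) :
    AEStronglyMeasurable (fun x => ∑' k, c k * φ k x) μ :=
  aestronglyMeasurable_of_tendsto_ae atTop
    (fun N => Finset.aestronglyMeasurable_fun_sum (range N) fun k _ => (hφ k).const_mul (c k))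
    (ae_of_all _ fun x => (hsum x).hasSum.tendsto_sum_nat)

theorem MeasureTheory.MemLp.eLpNorm_two_eq_sqrt_integral_sq {f : Ω → ℝ} (hf : MemLp f 2 μ) :
    eLpNorm f 2 μ = ENNReal.ofReal √(∫ x, f x ^ 2 ∂μ) := by
  rw [hf.eLpNorm_eq_integral_rpow_norm two_ne_zero ENNReal.ofNat_ne_top, Real.sqrt_eq_rpow]
  simp [one_div]

theorem integral_sq_sum_of_orthonormal {φ : ℕ → Ω → ℝ} (hφ : ∀ k, MemLp (φ k) 2 μ)
    (hortho : ∀ j k, ∫ x, φ j x * φ k x ∂μ = if j = k then 1 else 0) (a : ℕ → ℝ)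
    (s : Finset ℕ) :
    ∫ x, (∑ k ∈ s, a k * φ k x) ^ 2 ∂μ = ∑ k ∈ s, a k ^ 2 := by
  have hmul : ∀ j k, Integrable (fun x => a j * a k * (φ j x * φ k x)) μ := fun j k =>
    ((hφ j).integrable_mul (hφ k)).const_mul _
  have hexp : ∀ x, (∑ k ∈ s, a k * φ k x) ^ 2 = ∑ j ∈ s, ∑ k ∈ s, a j * a k * (φ j x * φ k x) :=
    fun x => by rw [sq, Finset.sum_mul_sum]; simp_rw [mul_mul_mul_comm]
  simp_rw [hexp]
  rw [integral_finsetSum _ fun j _ => integrable_finsetSum _ fun k _ => hmul j k]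
  refine Finset.sum_congr rfl fun j hj => ?_
  rw [integral_finsetSum _ fun k _ => hmul j k]
  simp_rw [integral_const_mul, hortho, mul_ite, mul_one, mul_zero, Finset.sum_ite_eq, if_pos hj, sq]

theorem eLpNorm_sum_of_orthonormal {φ : ℕ → Ω → ℝ} (hφ : ∀ k, MemLp (φ k) 2 μ)
    (hortho : ∀ j k, ∫ x, φ j x * φ k x ∂μ = if j = k then 1 else 0) (a : ℕ → ℝ)
    (s : Finset ℕ) :
    eLpNorm (fun x => ∑ k ∈ s, a k * φ k x) 2 μ = ENNReal.ofReal √(∑ k ∈ s, a k ^ 2) := by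
  rw [(memLp_finsetSum s fun k _ => (hφ k).const_mul (a k)).eLpNorm_two_eq_sqrt_integral_sq,
    integral_sq_sum_of_orthonormal hφ hortho]

theorem eLpNorm_tsum_sub_sum_range_le {φ : ℕ → Ω → ℝ} (hφ : ∀ k, MemLp (φ k) 2 μ)
    (hortho : ∀ j k, ∫ x, φ j x * φ k x ∂μ = if j = k then 1 else 0) {c : ℕ → ℝ}
    (hsum : ∀ x, Summable fun k => c k * φ k x) (hc : Summable fun k => c k ^ 2) (N : ℕ) :
    eLpNorm (fun x => ∑' k, c k * φ k x - ∑ k ∈ range N, c k * φ k x) 2 μ ≤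
      ENNReal.ofReal √(∑' k, c (k + N) ^ 2) := by
  have hS : ∀ M, MemLp (fun x => ∑ k ∈ range M, c k * φ k x) 2 μ := fun M =>
    memLp_finsetSum _ fun k _ => (hφ k).const_mul (c k)
  calc _ ≤ atTop.liminf fun M =>
        eLpNorm (fun x => ∑ k ∈ range M, c k * φ k x - ∑ k ∈ range N, c k * φ k x) 2 μ :=
        Lp.eLpNorm_lim_le_liminf_eLpNorm (fun M => ((hS M).sub (hS N)).aestronglyMeasurable) _
          (ae_of_all _ fun x => (hsum x).hasSum.tendsto_sum_nat.sub_const _)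
    _ ≤ _ := by
      refine liminf_le_of_frequently_le' (eventually_atTop.2 ⟨N, fun M hNM => ?_⟩).frequently
      simp_rw [← Finset.sum_Ico_eq_sub _ hNM]
      rw [eLpNorm_sum_of_orthonormal hφ hortho, Finset.sum_Ico_eq_sum_range]
      gcongr
      simpa only [add_comm N] using
        ((summable_nat_add_iff N).2 hc).sum_le_tsum _ fun k _ => sq_nonneg _

theorem eLpNorm_tsum_sub_sum_range_add_sum_le {φ : ℕ → Ω → ℝ} (hφ : ∀ k, MemLp (φ k) 2 μ)
    (hortho : ∀ j k, ∫ x, φ j x * φ k x ∂μ = if j = k then 1 else 0) {c : ℕ → ℝ}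
    (hsum : ∀ x, Summable fun k => c k * φ k x) (hc : Summable fun k => c k ^ 2) (N : ℕ)
    (d : ℕ → ℝ) (s : Finset ℕ) :
    eLpNorm (fun x => ∑' k, c k * φ k x - (∑ k ∈ range N, c k * φ k x + ∑ k ∈ s, d k * φ k x))
      2 μ ≤ ENNReal.ofReal √(∑' k, c (k + N) ^ 2) + ENNReal.ofReal √(∑ k ∈ s, d k ^ 2) := by
  simp_rw [← sub_sub]
  refine (eLpNorm_sub_le ?_ ?_ one_le_two).trans (add_le_add
    (eLpNorm_tsum_sub_sum_range_le hφ hortho hsum hc N)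
    (eLpNorm_sum_of_orthonormal hφ hortho d s).le)
  · exact (aestronglyMeasurable_tsum_mul (fun k => (hφ k).1) hsum).sub
      (Finset.aestronglyMeasurable_fun_sum _ fun k _ => (hφ k).1.const_mul (c k))
  · exact Finset.aestronglyMeasurable_fun_sum _ fun k _ => (hφ k).1.const_mul (d k)

end L2Expansion

theorem summable_of_summable_mul_of_tendsto_atTop {ω a : ℕ → ℝ} (ha : ∀ k, 0 ≤ a k)
    (hω : Tendsto ω atTop atTop) (h : Summable fun k => ω k * a k) : Summable a :=
  h.of_norm_bounded_eventually_nat <| (hω.eventually_ge_atTop 1).mono fun k hk => by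
    rw [Real.norm_of_nonneg (ha k)]
    exact le_mul_of_one_le_left (ha k) hk

theorem exists_linear_interpolation_coeffs {ι Ω : Type*} [Fintype ι] [DecidableEq ι]
    (φ : ℕ → Ω → ℝ) (X : ι → Ω) (p : ℕ)
    (hp : ∀ y : ι → ℝ, ∃ c : ℕ → ℝ, ∀ j, ∑ k ∈ range p, c k * φ k (X j) = y j) :
    ∃ e : ι → ℕ → ℝ, (∀ i k, p ≤ k → e i k = 0) ∧
      ∀ (y : ι → ℝ) j, ∑ k ∈ range p, (∑ i, y i * e i k) * φ k (X j) = y j := by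
  choose c hc using hp
  refine ⟨fun i k => if k < p then c (Pi.single i 1) k else 0,
    fun i k hk => if_neg hk.not_gt, fun y j => ?_⟩
  calc ∑ k ∈ range p, (∑ i, y i * if k < p then c (Pi.single i 1) k else 0) * φ k (X j)
      = ∑ i, y i * ∑ k ∈ range p, c (Pi.single i 1) k * φ k (X j) := by
        simp_rw [Finset.mul_sum, Finset.sum_mul]
        rw [Finset.sum_comm]
        refine Finset.sum_congr rfl fun i _ => Finset.sum_congr rfl fun k hk => ?_
        rw [if_pos (Finset.mem_range.1 hk)]
        ring
    _ = y j := by simp [hc, Pi.single_apply]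

theorem sum_fin_add_mul_eq_of_le {Ω : Type*} (φ : ℕ → Ω → ℝ) (c d : ℕ → ℝ) {p N : ℕ}
    (hpN : p ≤ N) (hd : ∀ k, p ≤ k → d k = 0) (x : Ω) :
    ∑ k : Fin N, (c k + d k) * φ k x =
      ∑ k ∈ range N, c k * φ k x + ∑ k ∈ range p, d k * φ k x := by
  rw [Fin.sum_univ_eq_sum_range (fun k => (c k + d k) * φ k x)]
  simp_rw [add_mul, Finset.sum_add_distrib]
  rw [Finset.sum_subset (Finset.range_subset_range.2 hpN) fun k _ hk => by
    rw [hd k (not_lt.1 (Finset.mem_range.not.1 hk)), zero_mul]]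

theorem rkhs_near_optimal_interpolant_exists_general
    {Ω : Type*} [MetricSpace Ω] [MeasurableSpace Ω] [BorelSpace Ω] (μ : Measure Ω)
    (φ : ℕ → Ω → ℝ) (hφcont : ∀ k, Continuous (φ k))
    (hortho : ∀ j k, ∫ x, φ j x * φ k x ∂μ = if j = k then 1 else 0)
    (ω : ℕ → ℝ) (hωtop : Tendsto ω atTop atTop)
    {n : ℕ} (X : Fin n → Ω)
    (pX : ℕ)
    (hpX : ∀ y : Fin n → ℝ, ∃ c : ℕ → ℝ, ∀ j, ∑ k ∈ Finset.range pX, c k * φ k (X j) = y j)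
    (c : ℕ → ℝ) (hcw : Summable fun k => ω k * (c k) ^ 2)
    (hcabs : ∀ x : Ω, Summable fun k => |c k * φ k x|) :
    ∀ ε : ℝ, 0 < ε → ∃ (p : ℕ) (b : Fin p → ℝ),
      (∀ j, ∑ k, b k * φ (k : ℕ) (X j) = ∑' k, c k * φ k (X j)) ∧
      eLpNorm (fun x => (∑' k, c k * φ k x) - ∑ k : Fin p, b k * φ (k : ℕ) x) 2 μ ≤
        (⨅ b' : Fin p → ℝ,
          eLpNorm (fun x => (∑' k, c k * φ k x) - ∑ k : Fin p, b' k * φ (k : ℕ) x) 2 μ) +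
        ENNReal.ofReal ε := by
  intro ε hε
  have hφ : ∀ k, MemLp (φ k) 2 μ := fun k =>
    (memLp_two_iff_integrable_sq (hφcont k).aestronglyMeasurable).2 <|
      Integrable.of_integral_ne_zero (by simp [sq, hortho])
  have hsum : ∀ x, Summable fun k => c k * φ k x := fun x => (hcabs x).of_abs
  have hc2 : Summable fun k => c k ^ 2 :=
    summable_of_summable_mul_of_tendsto_atTop (fun k => sq_nonneg _) hωtop hcw
  obtain ⟨e, he0, he⟩ := exists_linear_interpolation_coeffs φ X pX hpX
  set S : ℕ → Ω → ℝ := fun N x => ∑ k ∈ range N, c k * φ k x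
  -- the correction interpolates the residual of the truncated expansion at the nodes
  set d : ℕ → ℕ → ℝ := fun N k => ∑ i, (∑' k, c k * φ k (X i) - S N (X i)) * e i k
  have hres : ∀ i, Tendsto (fun N => ∑' k, c k * φ k (X i) - S N (X i)) atTop (𝓝 0) := fun i =>
    by simpa using (hsum (X i)).hasSum.tendsto_sum_nat.const_sub (∑' k, c k * φ k (X i))
  have hd : ∀ k, Tendsto (fun N => d N k) atTop (𝓝 0) := fun k => by
    simpa using tendsto_finsetSum univ fun i _ => (hres i).mul_const (e i k)
  have hsmall : ∀ᶠ N in atTop, √(∑' k, c (k + N) ^ 2) + √(∑ k ∈ range pX, d N k ^ 2) < ε := by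
    refine Tendsto.eventually_lt_const hε ?_
    simpa using (tendsto_sum_nat_add fun k => c k ^ 2).sqrt.add
      (tendsto_finsetSum (range pX) fun k _ => (hd k).pow 2).sqrt
  obtain ⟨N, hN, hpN⟩ := (hsmall.and (eventually_ge_atTop pX)).exists
  have hg : ∀ x, ∑ k : Fin N, (c k + d N k) * φ k x = S N x + ∑ k ∈ range pX, d N k * φ k x :=
    sum_fin_add_mul_eq_of_le φ c (d N) hpN fun k hk => by simp [d, he0 _ k hk]
  refine ⟨N, fun k => c k + d N k, fun j => by rw [hg, he]; ring, ?_⟩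
  calc _ = eLpNorm (fun x => ∑' k, c k * φ k x - (S N x + ∑ k ∈ range pX, d N k * φ k x)) 2 μ := by
        simp only [hg]
    _ ≤ ENNReal.ofReal √(∑' k, c (k + N) ^ 2) + ENNReal.ofReal √(∑ k ∈ range pX, d N k ^ 2) :=
        eLpNorm_tsum_sub_sum_range_add_sum_le hφ hortho hsum hc2 N (d N) (range pX)
    _ ≤ ENNReal.ofReal ε := by
        rw [← ENNReal.ofReal_add (Real.sqrt_nonneg _) (Real.sqrt_nonneg _)]
        exact ENNReal.ofReal_le_ofReal hN.le
    _ ≤ _ := le_add_self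

/-- For `f` in the RKHS (coefficients `c` with `∑ ω_k c_k² < ∞`, absolutely
convergent expansion), for every `ε > 0` there exist a finite `p` and `g ∈ span{φ_1,…,φ_p}`
interpolating `f` on `X` with `‖f − g‖_{L²} ≤ inf_{h ∈ span{φ_1,…,φ_p}} ‖f − h‖_{L²} + ε`. -/
theorem rkhs_near_optimal_interpolant_exists
    {Ω : Type*} [MetricSpace Ω] [MeasurableSpace Ω] [BorelSpace Ω] (μ : Measure Ω)
    (hμpos : ∀ U : Set Ω, IsOpen U → U.Nonempty → 0 < μ U)
    (Ωm : ℕ → Set Ω) (hΩcpt : ∀ m, IsCompact (Ωm m)) (hΩmono : Monotone Ωm)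
    (hΩfin : ∀ m, μ (Ωm m) < ⊤) (hΩunion : (⋃ m, Ωm m) = Set.univ)
    (φ : ℕ → Ω → ℝ) (hφcont : ∀ k, Continuous (φ k))
    (hortho : ∀ j k, ∫ x, φ j x * φ k x ∂μ = if j = k then 1 else 0)
    (ω : ℕ → ℝ) (hωpos : ∀ k, 0 < ω k) (hωtop : Tendsto ω atTop atTop)
    (K : Ω → Ω → ℝ)
    (hKabs : ∀ x y : Ω, Summable fun k => |(ω k)⁻¹ * φ k x * φ k y|)
    (hKsum : ∀ x y : Ω, HasSum (fun k => (ω k)⁻¹ * φ k x * φ k y) (K x y))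
    (hKunif : TendstoUniformly (fun p (z : Ω × Ω) => Kpart ω φ p z.1 z.2)
      (fun z => K z.1 z.2) atTop)
    (hKbdd : ∃ M : ℝ, ∀ x y : Ω, |K x y| ≤ M)
    (hKcont : Continuous fun z : Ω × Ω => K z.1 z.2)
    (hKL2 : MemLp (fun z : Ω × Ω => K z.1 z.2) 2 (μ.prod μ))
    {n : ℕ} (X : Fin n → Ω) (hXinj : Function.Injective X)
    (pX : ℕ)
    (hpX : ∀ y : Fin n → ℝ, ∃ c : ℕ → ℝ, ∀ j, ∑ k ∈ Finset.range pX, c k * φ k (X j) = y j)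
    (c : ℕ → ℝ) (hcw : Summable fun k => ω k * (c k) ^ 2)
    (hcabs : ∀ x : Ω, Summable fun k => |c k * φ k x|) :
    ∀ ε : ℝ, 0 < ε → ∃ (p : ℕ) (b : Fin p → ℝ),
      (∀ j, ∑ k, b k * φ (k : ℕ) (X j) = ∑' k, c k * φ k (X j)) ∧
      eLpNorm (fun x => (∑' k, c k * φ k x) - ∑ k : Fin p, b k * φ (k : ℕ) x) 2 μ ≤
        (⨅ b' : Fin p → ℝ,
          eLpNorm (fun x => (∑' k, c k * φ k x) - ∑ k : Fin p, b' k * φ (k : ℕ) x) 2 μ) +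
        ENNReal.ofReal ε :=
  rkhs_near_optimal_interpolant_exists_general μ φ hφcont hortho ω hωtop X pX hpX c hcw hcabs
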